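/- Let G be a finite subgroup of Aut(𝔻) (the Möbius transformations of the open unit disk). Then G has a common fixed point α ∈ 𝔻; i.e., there exists α in the open unit disk with ρ(α) = α for every ρ ∈ G. -/

import Mathlib

/-!
Holomorphic automorphisms of the disk preserve `hypGap a z = sinh² (d(a, z) / 2)`, `d` the
hyperbolic distance: by Schwarz–Pick, applied to `ρ` and to `ρ⁻¹`, neither can increase it.
Hence `w ↦ ∑ ρ ∈ G, hypGap (ρ 0) w` is `G`-invariant. It is proper on the disk and strictly
midpoint convex for the Euclidean affine structure, so it has exactly one minimiser, and every
`ρ ∈ G` must fix it.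
-/

open Complex ComplexConjugate Metric Set

noncomputable def diskMobius (a z : ℂ) : ℂ := (a - z) / (1 - conj a * z)

-- `sinh² (d(a, z) / 2)`; in terms of the pseudo-hyperbolic distance `δ = ‖diskMobius a z‖`
-- it is `δ² / (1 - δ²)` (see `normSq_diskMobius`).
noncomputable def hypGap (a z : ℂ) : ℝ := normSq (a - z) / ((1 - normSq a) * (1 - normSq z))

lemma normSq_lt_one_of_norm_lt_one {z : ℂ} (hz : ‖z‖ < 1) : normSq z < 1 := by
  rw [← Complex.sq_norm]; exact pow_lt_one₀ (norm_nonneg z) hz two_ne_zero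

lemma one_sub_normSq_pos {z : ℂ} (hz : ‖z‖ < 1) : 0 < 1 - normSq z :=
  sub_pos.2 (normSq_lt_one_of_norm_lt_one hz)

lemma normSq_one_sub_conj_mul (a z : ℂ) :
    normSq (1 - conj a * z) = normSq (a - z) + (1 - normSq a) * (1 - normSq z) := by
  simp only [normSq_apply, mul_re, mul_im, sub_re, sub_im, conj_re, conj_im, one_re, one_im]
  ring

lemma hypGap_nonneg {a z : ℂ} (ha : ‖a‖ < 1) (hz : ‖z‖ < 1) : 0 ≤ hypGap a z :=
  div_nonneg (normSq_nonneg _) (mul_pos (one_sub_normSq_pos ha) (one_sub_normSq_pos hz)).le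

lemma normSq_diskMobius {a z : ℂ} (ha : ‖a‖ < 1) (hz : ‖z‖ < 1) :
    normSq (diskMobius a z) = hypGap a z / (1 + hypGap a z) := by
  have hD := mul_pos (one_sub_normSq_pos ha) (one_sub_normSq_pos hz)
  rw [diskMobius, normSq_div, normSq_one_sub_conj_mul, hypGap, one_add_div hD.ne',
    div_div_div_cancel_right₀ hD.ne', add_comm]

lemma norm_diskMobius_lt_one {a z : ℂ} (ha : ‖a‖ < 1) (hz : ‖z‖ < 1) :
    ‖diskMobius a z‖ < 1 := by
  have h := hypGap_nonneg ha hz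
  rw [← sq_lt_one_iff₀ (norm_nonneg _), Complex.sq_norm, normSq_diskMobius ha hz,
    div_lt_one (by linarith)]
  linarith

lemma one_sub_conj_mul_ne_zero {a z : ℂ} (ha : ‖a‖ < 1) (hz : ‖z‖ < 1) :
    1 - conj a * z ≠ 0 := by
  refine sub_ne_zero.2 (fun h => ?_)
  have : ‖conj a * z‖ < 1 := by
    rw [norm_mul, RCLike.norm_conj]
    exact mul_lt_one_of_nonneg_of_lt_one_left (norm_nonneg _) ha hz.le
  rw [← h, norm_one] at this
  exact lt_irrefl _ this

lemma diskMobius_diskMobius {a z : ℂ} (ha : ‖a‖ < 1) (hz : ‖z‖ < 1) :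
    diskMobius a (diskMobius a z) = z := by
  have h₁ := one_sub_conj_mul_ne_zero ha hz
  have h₂ := one_sub_conj_mul_ne_zero ha ha
  have hnum : a - (a - z) / (1 - conj a * z) = z * (1 - conj a * a) / (1 - conj a * z) := by
    rw [eq_div_iff h₁, sub_mul, div_mul_cancel₀ _ h₁]; ring
  have hden : 1 - conj a * ((a - z) / (1 - conj a * z)) = (1 - conj a * a) / (1 - conj a * z) := by
    field_simp; ring
  rw [diskMobius, diskMobius, hnum, hden, div_div_div_cancel_right₀ h₁, mul_div_cancel_right₀ z h₂]

@[simp] lemma diskMobius_zero (a : ℂ) : diskMobius a 0 = a := by simp [diskMobius]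

@[simp] lemma diskMobius_self (a : ℂ) : diskMobius a a = 0 := by simp [diskMobius]

lemma differentiableOn_diskMobius {a : ℂ} (ha : ‖a‖ < 1) :
    DifferentiableOn ℂ (diskMobius a) (ball 0 1) :=
  DifferentiableOn.div (by fun_prop) (by fun_prop) fun _ hz =>
    one_sub_conj_mul_ne_zero ha (mem_ball_zero_iff.1 hz)

lemma mapsTo_diskMobius {a : ℂ} (ha : ‖a‖ < 1) : MapsTo (diskMobius a) (ball 0 1) (ball 0 1) :=
  fun _ hz => mem_ball_zero_iff.2 (norm_diskMobius_lt_one ha (mem_ball_zero_iff.1 hz))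

lemma hypGap_le_of_mapsTo {f : ℂ → ℂ} (hd : DifferentiableOn ℂ f (ball 0 1))
    (hf : MapsTo f (ball 0 1) (ball 0 1)) {z w : ℂ} (hz : ‖z‖ < 1) (hw : ‖w‖ < 1) :
    hypGap (f z) (f w) ≤ hypGap z w := by
  have hfz := mem_ball_zero_iff.1 (hf (mem_ball_zero_iff.2 hz))
  have hfw := mem_ball_zero_iff.1 (hf (mem_ball_zero_iff.2 hw))
  set g := diskMobius (f z) ∘ f ∘ diskMobius z
  have hg : ‖g (diskMobius z w)‖ ≤ ‖diskMobius z w‖ :=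
    Complex.norm_le_norm_of_mapsTo_ball
      ((differentiableOn_diskMobius hfz).comp (hd.comp (differentiableOn_diskMobius hz)
        (mapsTo_diskMobius hz)) (hf.comp (mapsTo_diskMobius hz)))
      (((mapsTo_diskMobius hfz).comp (hf.comp (mapsTo_diskMobius hz))).mono_right
        ball_subset_closedBall)
      (by simp [g]) (norm_diskMobius_lt_one hz hw)
  simp only [g, Function.comp_apply, diskMobius_diskMobius hz hw] at hg
  rw [← sq_le_sq₀ (norm_nonneg _) (norm_nonneg _), Complex.sq_norm, Complex.sq_norm,
    normSq_diskMobius hfz hfw, normSq_diskMobius hz hw,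
    div_le_div_iff₀ (by linarith [hypGap_nonneg hfz hfw]) (by linarith [hypGap_nonneg hz hw])] at hg
  linarith

lemma normSq_add_div_add_le (x y : ℂ) {s t : ℝ} (hs : 0 < s) (ht : 0 < t) :
    normSq (x + y) / (s + t) ≤ normSq x / s + normSq y / t := by
  rw [div_add_div _ _ hs.ne' ht.ne', div_le_div_iff₀ (by positivity) (by positivity)]
  simp only [normSq_apply, add_re, add_im]
  nlinarith [sq_nonneg (x.re * t - y.re * s), sq_nonneg (x.im * t - y.im * s),
    sq_nonneg (x.re + y.re), sq_nonneg (x.im + y.im)]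

lemma one_sub_normSq_midpoint (w₁ w₂ : ℂ) :
    1 - normSq ((w₁ + w₂) / 2) = (1 - normSq w₁ + (1 - normSq w₂)) / 2 + normSq (w₁ - w₂) / 4 := by
  simp only [normSq_apply, add_re, add_im, sub_re, sub_im, div_re, div_im]
  norm_num
  ring

lemma hypGap_midpoint_lt {a w₁ w₂ : ℂ} (ha : ‖a‖ < 1) (h₁ : ‖w₁‖ < 1) (h₂ : ‖w₂‖ < 1)
    (hne : w₁ ≠ w₂) : hypGap a ((w₁ + w₂) / 2) < (hypGap a w₁ + hypGap a w₂) / 2 := by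
  -- `normSq (a - ·) / (1 - normSq ·)` is a quadratic over a concave function, and the
  -- denominator is strictly midpoint concave: `Dm` exceeds `(D₁ + D₂) / 2` by `‖w₁ - w₂‖² / 4`.
  have hDa := one_sub_normSq_pos ha
  have hD₁ := one_sub_normSq_pos h₁
  have hD₂ := one_sub_normSq_pos h₂
  have hδ : 0 < normSq (w₁ - w₂) := normSq_pos.2 (sub_ne_zero.2 hne)
  set D₁ := 1 - normSq w₁
  set D₂ := 1 - normSq w₂
  set Dm := 1 - normSq ((w₁ + w₂) / 2)
  set T := normSq (a - w₁) / D₁ + normSq (a - w₂) / D₂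
  have hDm : Dm = (D₁ + D₂) / 2 + normSq (w₁ - w₂) / 4 := one_sub_normSq_midpoint w₁ w₂
  have hDm_pos : 0 < Dm := by rw [hDm]; linarith
  have hT : 0 < T := by
    rcases eq_or_ne a w₁ with rfl | h
    · exact add_pos_of_nonneg_of_pos (div_nonneg (normSq_nonneg _) hD₁.le)
        (div_pos (normSq_pos.2 (sub_ne_zero.2 hne)) hD₂)
    · exact add_pos_of_pos_of_nonneg (div_pos (normSq_pos.2 (sub_ne_zero.2 h)) hD₁)
        (div_nonneg (normSq_nonneg _) hD₂.le)
  have hTitu : normSq (a - (w₁ + w₂) / 2) / ((D₁ + D₂) / 2) ≤ T / 2 := by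
    have h := normSq_add_div_add_le (a - w₁) (a - w₂) hD₁ hD₂
    rw [show a - w₁ + (a - w₂) = 2 * (a - (w₁ + w₂) / 2) by ring, normSq_mul,
      normSq_ofNat] at h
    rw [div_le_iff₀ (by linarith)] at h ⊢
    linarith
  have hu : normSq (a - (w₁ + w₂) / 2) / Dm < T / 2 :=
    calc normSq (a - (w₁ + w₂) / 2) / Dm
        = normSq (a - (w₁ + w₂) / 2) / ((D₁ + D₂) / 2) * (((D₁ + D₂) / 2) / Dm) := by
          field_simp
      _ ≤ T / 2 * (((D₁ + D₂) / 2) / Dm) := by gcongr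
      _ < T / 2 := mul_lt_of_lt_one_right (half_pos hT)
          ((div_lt_one hDm_pos).2 (by rw [hDm]; linarith))
  have key : ∀ w, hypGap a w = normSq (a - w) / (1 - normSq w) / (1 - normSq a) := fun w => by
    rw [hypGap, div_div, mul_comm]
  rw [key, key, key, ← add_div, div_right_comm _ (1 - normSq a)]
  exact div_lt_div_of_pos_right hu hDa

section Energy

variable {ι : Type*} [Fintype ι] {p : ι → ℂ}

noncomputable def hypEnergy (p : ι → ℂ) (w : ℂ) : ℝ := ∑ i, hypGap (p i) w

lemma hypGap_le_hypEnergy (hp : ∀ i, ‖p i‖ < 1) {w : ℂ} (hw : ‖w‖ < 1) (i : ι) :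
    hypGap (p i) w ≤ hypEnergy p w :=
  Finset.single_le_sum (fun j _ => hypGap_nonneg (hp j) hw) (Finset.mem_univ i)

lemma continuousOn_hypEnergy (hp : ∀ i, ‖p i‖ < 1) : ContinuousOn (hypEnergy p) (ball 0 1) :=
  continuousOn_finsetSum _ fun i _ => ContinuousOn.div (by fun_prop) (by fun_prop) fun _ hw =>
    (mul_pos (one_sub_normSq_pos (hp i)) (one_sub_normSq_pos (mem_ball_zero_iff.1 hw))).ne'

lemma exists_isMinOn_hypEnergy [Nonempty ι] (hp : ∀ i, ‖p i‖ < 1) :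
    ∃ α ∈ ball (0 : ℂ) 1, IsMinOn (hypEnergy p) (ball 0 1) α := by
  obtain ⟨i⟩ := ‹Nonempty ι›
  set a := p i
  set M := hypEnergy p a
  have hDa := one_sub_normSq_pos (hp i)
  -- the sublevel set `{hypGap a · ≤ M}`, with the denominator cleared so that it is closed in `ℂ`
  set K := closedBall (0 : ℂ) 1 ∩ {w | normSq (a - w) ≤ M * ((1 - normSq a) * (1 - normSq w))}
  have hK : IsCompact K := (isCompact_closedBall 0 1).inter_right
    (isClosed_le (by fun_prop) (by fun_prop))
  have hKball : K ⊆ ball 0 1 := by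
    rintro w ⟨hw₁, hw : normSq (a - w) ≤ M * ((1 - normSq a) * (1 - normSq w))⟩
    rw [mem_closedBall_zero_iff] at hw₁
    rw [mem_ball_zero_iff]
    by_contra hw₂
    have hw1 : normSq w = 1 := by
      rw [← Complex.sq_norm, le_antisymm hw₁ (not_lt.1 hw₂), one_pow]
    rw [hw1, sub_self, mul_zero, mul_zero] at hw
    have haw : a = w := sub_eq_zero.1 (normSq_eq_zero.1 (le_antisymm hw (normSq_nonneg _)))
    exact hw₂ (haw ▸ hp i)
  have haK : a ∈ K := ⟨mem_closedBall_zero_iff.2 (hp i).le, show normSq (a - a) ≤ _ by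
    rw [sub_self, normSq_zero]
    exact mul_nonneg (hypGap_nonneg (hp i) (hp i) |>.trans (hypGap_le_hypEnergy hp (hp i) i))
      (mul_pos hDa hDa).le⟩
  obtain ⟨α, hαK, hmin⟩ := hK.exists_isMinOn ⟨a, haK⟩ ((continuousOn_hypEnergy hp).mono hKball)
  refine ⟨α, hKball hαK, fun w hw => ?_⟩
  by_cases hwK : w ∈ K
  · exact hmin hwK
  · have hw' := mem_ball_zero_iff.1 hw
    have hMw : M < hypGap a w := by
      rw [hypGap, lt_div_iff₀ (mul_pos hDa (one_sub_normSq_pos hw'))]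
      exact not_le.1 fun h => hwK ⟨ball_subset_closedBall hw, h⟩
    exact (hmin haK).trans (hMw.le.trans (hypGap_le_hypEnergy hp hw' i))

lemma hypEnergy_midpoint_lt [Nonempty ι] (hp : ∀ i, ‖p i‖ < 1) {w₁ w₂ : ℂ} (h₁ : ‖w₁‖ < 1)
    (h₂ : ‖w₂‖ < 1) (hne : w₁ ≠ w₂) :
    hypEnergy p ((w₁ + w₂) / 2) < (hypEnergy p w₁ + hypEnergy p w₂) / 2 := by
  simp only [hypEnergy, ← Finset.sum_add_distrib, Finset.sum_div]
  exact Finset.sum_lt_sum_of_nonempty Finset.univ_nonempty fun i _ =>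
    hypGap_midpoint_lt (hp i) h₁ h₂ hne

lemma eq_of_isMinOn_hypEnergy [Nonempty ι] (hp : ∀ i, ‖p i‖ < 1) {α β : ℂ} (hα : ‖α‖ < 1)
    (hβ : ‖β‖ < 1) (hmin : IsMinOn (hypEnergy p) (ball 0 1) α)
    (hle : hypEnergy p β ≤ hypEnergy p α) : β = α := by
  by_contra hne
  have hmid : ‖(β + α) / 2‖ < 1 := by
    rw [norm_div, Complex.norm_two]
    linarith [norm_add_le β α]
  have h₁ : hypEnergy p α ≤ hypEnergy p ((β + α) / 2) := hmin (mem_ball_zero_iff.2 hmid)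
  have h₂ := hypEnergy_midpoint_lt hp hβ hα hne
  linarith

end Energy

local notation "𝔻" => {z : ℂ // ‖z‖ < 1}

def IsHolomorphicSelfMap (ρ : 𝔻 → 𝔻) : Prop :=
  ∃ F : ℂ → ℂ, DifferentiableOn ℂ F (ball 0 1) ∧ ∀ z : 𝔻, F z = ρ z

lemma IsHolomorphicSelfMap.hypGap_le {ρ : 𝔻 → 𝔻} (hρ : IsHolomorphicSelfMap ρ) (a b : 𝔻) :
    hypGap (ρ a) (ρ b) ≤ hypGap a b := by
  obtain ⟨F, hF, hFρ⟩ := hρ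
  have hmaps : MapsTo F (ball 0 1) (ball 0 1) := fun z hz => by
    rw [mem_ball_zero_iff, hFρ ⟨z, mem_ball_zero_iff.1 hz⟩]
    exact (ρ _).2
  rw [← hFρ, ← hFρ]
  exact hypGap_le_of_mapsTo hF hmaps a.2 b.2

lemma hypGap_perm_apply_eq {ρ : Equiv.Perm 𝔻} (h : IsHolomorphicSelfMap ρ)
    (h' : IsHolomorphicSelfMap ⇑ρ⁻¹) (a b : 𝔻) : hypGap (ρ a) (ρ b) = hypGap a b :=
  le_antisymm (h.hypGap_le a b) (by simpa using h'.hypGap_le (ρ a) (ρ b))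

lemma hypEnergy_orbit_apply_eq {G : Subgroup (Equiv.Perm 𝔻)} [Fintype G]
    (hiso : ∀ σ ∈ G, ∀ a b : 𝔻, hypGap (σ a) (σ b) = hypGap a b) {σ : Equiv.Perm 𝔻}
    (hσ : σ ∈ G) (x₀ x : 𝔻) :
    hypEnergy (fun τ : G => (τ.1 x₀ : ℂ)) (σ x) = hypEnergy (fun τ : G => (τ.1 x₀ : ℂ)) x :=
  Fintype.sum_equiv (Equiv.mulLeft ⟨σ, hσ⟩⁻¹) _ _ fun τ => by
    show hypGap (τ.1 x₀) (σ x) = hypGap ((⟨σ, hσ⟩⁻¹ * τ : G).1 x₀) x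
    have : τ.1 x₀ = σ ((⟨σ, hσ⟩⁻¹ * τ : G).1 x₀) := by simp
    rw [this, hiso σ hσ]

/-- A finite subgroup of the group of holomorphic automorphisms of the open unit disk has a
common fixed point in the disk. -/
theorem stmt6 (G : Subgroup (Equiv.Perm {z : ℂ // ‖z‖ < 1})) [Finite G]
    (hol : ∀ ρ ∈ G, ∃ F : ℂ → ℂ, DifferentiableOn ℂ F (Metric.ball (0 : ℂ) 1) ∧
      ∀ z : {z : ℂ // ‖z‖ < 1}, F (z : ℂ) = ((ρ z) : ℂ)) :
    ∃ α : {z : ℂ // ‖z‖ < 1}, ∀ ρ ∈ G, ρ α = α := by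
  have : Fintype G := Fintype.ofFinite G
  have hiso : ∀ σ ∈ G, ∀ a b : 𝔻, hypGap (σ a) (σ b) = hypGap a b := fun σ hσ =>
    hypGap_perm_apply_eq (hol σ hσ) (hol σ⁻¹ (G.inv_mem hσ))
  set p : G → ℂ := fun τ => (τ.1 ⟨0, by simp⟩ : ℂ)
  have hp : ∀ τ, ‖p τ‖ < 1 := fun τ => (τ.1 _).2
  obtain ⟨α, hα, hmin⟩ := exists_isMinOn_hypEnergy hp
  refine ⟨⟨α, mem_ball_zero_iff.1 hα⟩, fun σ hσ => Subtype.ext ?_⟩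
  refine eq_of_isMinOn_hypEnergy hp (mem_ball_zero_iff.1 hα) (σ _).2 hmin ?_
  exact (hypEnergy_orbit_apply_eq hiso hσ _ _).le
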